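/- If α + 1 > 2kt with t ≥ 0 and k a nonnegative integer, then |L_k^α(t)| ≥ (1/2) · Γ(k+α+1)/(Γ(k+1)Γ(α+1)). -/

import Mathlib

/-!
Write `L_k^α(t) = ∑_{j ≤ k} (-1)^j a_j` with `a_j = binom(k+α, k-j) t^j / j! ≥ 0`. Consecutive
terms satisfy `a_{j+1} / a_j = (k-j) t / ((j+1)(α+j+1)) ≤ k t / (α+1) < 1/2`, so the alternating
sum `a_0/2 - a_1 + a_2 - ⋯` of a nonincreasing nonnegative sequence is nonnegative, i.e.
`L_k^α(t) ≥ a_0 / 2`; finally `a_0 = binom(k+α, k) = Γ(k+α+1) / (Γ(k+1) Γ(α+1))`.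
-/

open scoped BigOperators

noncomputable def genBinom (x : ℝ) (m : ℕ) : ℝ :=
  (∏ i ∈ Finset.range m, (x - i)) / (m.factorial : ℝ)

noncomputable def laguerre (k : ℕ) (α : ℝ) (t : ℝ) : ℝ :=
  ∑ j ∈ Finset.range (k + 1),
    (-1 : ℝ) ^ j * genBinom ((k : ℝ) + α) (k - j) * t ^ j / (j.factorial : ℝ)

open Finset

theorem alternating_sum_nonneg {R : Type*} [CommRing R] [LinearOrder R] [IsStrictOrderedRing R]
    {a : ℕ → R} {n : ℕ} (hnonneg : ∀ j < n, 0 ≤ a j)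
    (hanti : ∀ j, j + 1 < n → a (j + 1) ≤ a j) :
    0 ≤ ∑ j ∈ range n, (-1) ^ j * a j := by
  induction n using Nat.twoStepInduction generalizing a with
  | zero => simp
  | one => simpa using hnonneg 0 one_pos
  | more n ih _ =>
    have htail := ih (a := fun j => a (j + 2)) (fun j hj => hnonneg _ (by omega))
      (fun j hj => hanti _ (by omega))
    have h01 := hanti 0 (by omega)
    rw [sum_range_succ', sum_range_succ']
    simp only [pow_succ, zero_add, pow_zero, mul_neg, mul_one, neg_neg, neg_mul, one_mul] at htail ⊢
    linarith

theorem half_le_alternating_sum {R : Type*} [Field R] [LinearOrder R] [IsStrictOrderedRing R]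
    {a : ℕ → R} {n : ℕ} (hn : 0 < n) (hnonneg : ∀ j < n, 0 ≤ a j)
    (hhalf : ∀ j, j + 1 < n → 2 * a (j + 1) ≤ a j) :
    a 0 / 2 ≤ ∑ j ∈ range n, (-1) ^ j * a j := by
  obtain ⟨m, rfl⟩ := Nat.exists_eq_succ_of_ne_zero hn.ne'
  set c := Function.update a 0 (a 0 / 2)
  have hc0 : c 0 = a 0 / 2 := Function.update_self ..
  have hc : ∀ j, c (j + 1) = a (j + 1) := fun j => Function.update_of_ne j.succ_ne_zero ..
  have hc_nonneg : ∀ j < m + 1, 0 ≤ c j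
    | 0, _ => by linarith [hc0, hnonneg 0 hn]
    | j + 1, hj => hc j ▸ hnonneg _ (by omega)
  have hc_anti : ∀ j, j + 1 < m + 1 → c (j + 1) ≤ c j
    | 0, hj => by linarith [hc0, hc 0, hhalf 0 hj]
    | j + 1, hj => by
      rw [hc, hc]; linarith [hhalf (j + 1) hj, hnonneg (j + 2) hj]
  have hsum := alternating_sum_nonneg hc_nonneg hc_anti
  rw [sum_range_succ'] at hsum ⊢
  simp only [hc, hc0, pow_zero, one_mul] at hsum ⊢
  linarith

theorem genBinom_succ (x : ℝ) (m : ℕ) :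
    genBinom x (m + 1) = genBinom x m * (x - m) / (m + 1) := by
  simp only [genBinom, prod_range_succ, Nat.factorial_succ, Nat.cast_mul, Nat.cast_succ]
  field_simp

theorem genBinom_eq_Gamma {x : ℝ} {m : ℕ} (hx : (m : ℝ) - 1 < x) :
    genBinom x m = Real.Gamma (x + 1) / (Real.Gamma (m + 1) * Real.Gamma (x - m + 1)) := by
  induction m with
  | zero =>
    have : Real.Gamma (x + 1) ≠ 0 := (Real.Gamma_pos_of_pos (by rw [Nat.cast_zero] at hx; linarith)).ne'
    simp [genBinom, this]
  | succ m ih =>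
    push_cast at hx ⊢
    have hxm : 0 < x - m := by linarith
    rw [genBinom_succ, ih (by linarith), Real.Gamma_add_one (s := (m : ℝ) + 1) (by positivity),
      show x - (m + 1) + 1 = x - m by ring, Real.Gamma_add_one hxm.ne']
    have := (Real.Gamma_pos_of_pos hxm).ne'
    have := (Real.Gamma_pos_of_pos (by positivity : (0 : ℝ) < m + 1)).ne'
    field_simp

theorem genBinom_pos {x : ℝ} {m : ℕ} (hx : (m : ℝ) - 1 < x) : 0 < genBinom x m := by
  rw [genBinom_eq_Gamma hx]
  have := Real.Gamma_pos_of_pos (by linarith : 0 < x + 1)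
  have := Real.Gamma_pos_of_pos (by positivity : (0 : ℝ) < m + 1)
  have := Real.Gamma_pos_of_pos (by linarith : 0 < x - m + 1)
  positivity

noncomputable def laguerreTerm (k : ℕ) (α t : ℝ) (j : ℕ) : ℝ :=
  genBinom ((k : ℝ) + α) (k - j) * t ^ j / (j.factorial : ℝ)

theorem laguerre_eq_sum_laguerreTerm (k : ℕ) (α t : ℝ) :
    laguerre k α t = ∑ j ∈ range (k + 1), (-1) ^ j * laguerreTerm k α t j :=
  sum_congr rfl fun j _ => by rw [laguerreTerm]; ring

theorem laguerreTerm_nonneg (k : ℕ) {α t : ℝ} (hα : -1 < α) (ht : 0 ≤ t) (j : ℕ) :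
    0 ≤ laguerreTerm k α t j := by
  have : ((k - j : ℕ) : ℝ) ≤ k := by exact_mod_cast Nat.sub_le k j
  have := genBinom_pos (x := (k : ℝ) + α) (m := k - j) (by linarith)
  unfold laguerreTerm
  positivity

theorem laguerreTerm_succ_mul {k j : ℕ} (α t : ℝ) (hj : j < k) :
    laguerreTerm k α t (j + 1) * ((j + 1) * (α + j + 1))
      = laguerreTerm k α t j * ((k - j) * t) := by
  obtain ⟨n, rfl⟩ := Nat.exists_eq_add_of_lt hj
  rw [laguerreTerm, laguerreTerm, show j + n + 1 - j = n + 1 by omega,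
    show j + n + 1 - (j + 1) = n by omega, genBinom_succ, Nat.factorial_succ]
  push_cast
  field_simp
  ring

theorem two_mul_laguerreTerm_succ_le {k j : ℕ} {α t : ℝ} (hα : -1 < α) (ht : 0 ≤ t)
    (h : 2 * (k : ℝ) * t < α + 1) (hj : j < k) :
    2 * laguerreTerm k α t (j + 1) ≤ laguerreTerm k α t j := by
  have hj0 : (0 : ℝ) ≤ j := j.cast_nonneg
  have hD : 0 < ((j : ℝ) + 1) * (α + j + 1) := by nlinarith
  have hN : 2 * ((k - j) * t) ≤ ((j : ℝ) + 1) * (α + j + 1) := by nlinarith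
  refine le_of_mul_le_mul_right ?_ hD
  calc 2 * laguerreTerm k α t (j + 1) * (((j : ℝ) + 1) * (α + j + 1))
      = laguerreTerm k α t j * (2 * ((k - j) * t)) := by
        rw [mul_assoc, laguerreTerm_succ_mul α t hj]; ring
    _ ≤ laguerreTerm k α t j * (((j : ℝ) + 1) * (α + j + 1)) :=
        mul_le_mul_of_nonneg_left hN (laguerreTerm_nonneg k hα ht j)

/-- If `α + 1 > 2kt` with `t ≥ 0`, then
`|L_k^α(t)| ≥ (1/2) Γ(k+α+1)/(Γ(k+1)Γ(α+1))`. -/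
theorem stmt9 (k : ℕ) (α t : ℝ) (hα : -1 < α) (ht : 0 ≤ t)
    (h : 2 * (k : ℝ) * t < α + 1) :
    (1 / 2) * (Real.Gamma ((k : ℝ) + α + 1)
        / (Real.Gamma ((k : ℝ) + 1) * Real.Gamma (α + 1)))
      ≤ |laguerre k α t| := by
  have hterm0 : laguerreTerm k α t 0
      = Real.Gamma ((k : ℝ) + α + 1) / (Real.Gamma ((k : ℝ) + 1) * Real.Gamma (α + 1)) := by
    rw [laguerreTerm, Nat.sub_zero, genBinom_eq_Gamma (by linarith), add_sub_cancel_left]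
    simp
  calc (1 / 2) * (Real.Gamma ((k : ℝ) + α + 1)
        / (Real.Gamma ((k : ℝ) + 1) * Real.Gamma (α + 1))) = laguerreTerm k α t 0 / 2 := by
        rw [hterm0]; ring
    _ ≤ laguerre k α t := by
        rw [laguerre_eq_sum_laguerreTerm]
        exact half_le_alternating_sum k.succ_pos (fun j _ => laguerreTerm_nonneg k hα ht j)
          fun j hj => two_mul_laguerreTerm_succ_le hα ht h (by omega)
    _ ≤ |laguerre k α t| := le_abs_self _
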